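/- arXiv:1311.5870 — 2 statements merged into one kernel-verified Lean document; each statement's English description precedes it below -/
import Mathlib

section
/- Let Ω be a generic corner with parameter μ and let κ ∈ (0,1). For every admissible phase indicator χ on Ω with 0 < V < ∞ and M := {x ∈ Ω : χ₁(x)+χ₂(x)+χ₃(x) = 1}, there exists an at most countable family of balls B(x_i,r_i) such that: (1) the balls B(x_i,r_i) are pairwise disjoint and contained in Ω; (2) |M \ ∪_i B(x_i, 15μ⁻¹ r_i)| = 0; (3) (1/10)|B(x_i, κ r_i)| ≤ ∫_{B(x_i, κ r_i)} (χ₁+χ₂+χ₃) dx ≤ (9/10)|B(x_i, κ r_i)| for every i. -/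
noncomputable section

open MeasureTheory Metric Set

/-- ℝ³ as a Euclidean space. -/
abbrev E3 : Type := EuclideanSpace ℝ (Fin 3)

/-- Construct a vector of ℝ³ from its three coordinates. -/
def v3 (x y z : ℝ) : E3 := WithLp.toLp 2 ![x, y, z]

/-- The Euclidean dot product on ℝ³. -/
def dot3 (u v : E3) : ℝ := ∑ i : Fin 3, u i * v i

/-- The cross product on ℝ³. -/
def cross3 (u v : E3) : E3 :=
  v3 (u 1 * v 2 - u 2 * v 1) (u 2 * v 0 - u 0 * v 2) (u 0 * v 1 - u 1 * v 0)

/-- Divergence of a vector field on ℝ³. -/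
def divg (φ : E3 → E3) (x : E3) : ℝ :=
  ∑ i : Fin 3, fderiv ℝ φ x (EuclideanSpace.single i 1) i

/-- The set of test values defining the total variation of `χ` on `Ω`:
values `∫_Ω χ div φ` for `φ` a C¹ vector field compactly supported in `Ω` with `‖φ‖ ≤ 1`. -/
def tvSet (Ω : Set E3) (χ : E3 → ℝ) : Set ℝ :=
  {v : ℝ | ∃ φ : E3 → E3, ContDiff ℝ 1 φ ∧ HasCompactSupport φ ∧ tsupport φ ⊆ Ω ∧
      (∀ x, ‖φ x‖ ≤ 1) ∧ v = ∫ x in Ω, χ x * divg φ x}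

/-- The total variation `∫_Ω |∇χ|`. -/
def totalVariation (Ω : Set E3) (χ : E3 → ℝ) : ℝ := sSup (tvSet Ω χ)

/-- `χ ∈ BV(Ω, {0,1})`. -/
def IsBVIndicator (Ω : Set E3) (χ : E3 → ℝ) : Prop :=
  Measurable χ ∧ (∀ x, χ x = 0 ∨ χ x = 1) ∧ BddAbove (tvSet Ω χ)

/-- An admissible phase indicator `χ = (χ₁, χ₂, χ₃)`:
each `χᵢ ∈ BV(Ω, {0,1})` and `χ₁ + χ₂ + χ₃ ≤ 1`. -/
def AdmissiblePhase (Ω : Set E3) (χ : Fin 3 → E3 → ℝ) : Prop :=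
  (∀ i, IsBVIndicator Ω (χ i)) ∧ ∀ x, χ 0 x + χ 1 x + χ 2 x ≤ 1

/-- The volume `V = ∫_Ω (χ₁ + χ₂ + χ₃)` of the martensitic inclusion. -/
def phaseVolume (Ω : Set E3) (χ : Fin 3 → E3 → ℝ) : ℝ :=
  ∫ x in Ω, (χ 0 x + χ 1 x + χ 2 x)

/-- Squared Frobenius norm of a 3×3 matrix. -/
def frobSq (A : Matrix (Fin 3) (Fin 3) ℝ) : ℝ := ∑ i : Fin 3, ∑ j : Fin 3, (A i j) ^ 2

/-- Symmetric part `e(A) = (A + Aᵀ)/2` of a matrix. -/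
def matSym (A : Matrix (Fin 3) (Fin 3) ℝ) : Matrix (Fin 3) (Fin 3) ℝ :=
  (2⁻¹ : ℝ) • (A + A.transpose)

/-- The symmetrized gradient `e(u) = (∇u + ∇uᵀ)/2` of a displacement `u`. -/
def symGrad (u : E3 → E3) (x : E3) : Matrix (Fin 3) (Fin 3) ℝ :=
  Matrix.of fun i j =>
    (fderiv ℝ u x (EuclideanSpace.single j 1) i + fderiv ℝ u x (EuclideanSpace.single i 1) j) / 2

/-- Stress-free strain of the first martensite variant. -/
def em1 : Matrix (Fin 3) (Fin 3) ℝ := Matrix.diagonal ![-2, 1, 1]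

/-- Stress-free strain of the second martensite variant. -/
def em2 : Matrix (Fin 3) (Fin 3) ℝ := Matrix.diagonal ![1, -2, 1]

/-- Stress-free strain of the third martensite variant. -/
def em3 : Matrix (Fin 3) (Fin 3) ℝ := Matrix.diagonal ![1, 1, -2]

/-- The three stress-free strains of martensite. -/
def strains : Fin 3 → Matrix (Fin 3) (Fin 3) ℝ := ![em1, em2, em3]

/-- `Σᵢ χᵢ e⁽ⁱ⁾`. -/
def phaseStrain (χ : Fin 3 → E3 → ℝ) (x : E3) : Matrix (Fin 3) (Fin 3) ℝ :=
  ∑ i : Fin 3, χ i x • strains i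

/-- A (Sobolev-type) admissibility class for displacements: `u` and `∇u` are square
integrable on `Ω` and `u` is a.e. differentiable. Stands in for `H¹(Ω, ℝ³)`. -/
def IsH1 (Ω : Set E3) (u : E3 → E3) : Prop :=
  AEStronglyMeasurable u (volume.restrict Ω) ∧
  (∀ᵐ x ∂(volume.restrict Ω), DifferentiableAt ℝ u x) ∧
  IntegrableOn (fun x => ‖u x‖ ^ 2) Ω ∧
  IntegrableOn (fun x => ‖fderiv ℝ u x‖ ^ 2) Ω

/-- The elastic integral `∫_Ω |e(u) − Σᵢ χᵢ e⁽ⁱ⁾|² dx`. -/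
def elasticIntegral (Ω : Set E3) (χ : Fin 3 → E3 → ℝ) (u : E3 → E3) : ℝ :=
  ∫ x in Ω, frobSq (symGrad u x - phaseStrain χ x)

/-- The interfacial energy `E_interf[χ] = Σᵢ ∫_Ω |∇χᵢ|`. -/
def interfEnergy (Ω : Set E3) (χ : Fin 3 → E3 → ℝ) : ℝ :=
  ∑ i : Fin 3, totalVariation Ω (χ i)

/-- The elastic energy `E_elast[χ] = inf_{u ∈ H¹} ∫_Ω |e(u) − Σᵢ χᵢ e⁽ⁱ⁾|² dx`. -/
def elastEnergy (Ω : Set E3) (χ : Fin 3 → E3 → ℝ) : ℝ :=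
  sInf {v : ℝ | ∃ u : E3 → E3, IsH1 Ω u ∧ v = elasticIntegral Ω χ u}

/-- The total energy `E[χ] = E_interf[χ] + E_elast[χ]`. -/
def totalEnergy (Ω : Set E3) (χ : Fin 3 → E3 → ℝ) : ℝ :=
  interfEnergy Ω χ + elastEnergy Ω χ

/-- Twin/habit plane normals. -/
def nb12 : E3 := v3 (1 / Real.sqrt 2) (1 / Real.sqrt 2) 0
def nb21 : E3 := v3 (-(1 / Real.sqrt 2)) (1 / Real.sqrt 2) 0
def nb31 : E3 := v3 (1 / Real.sqrt 2) 0 (1 / Real.sqrt 2)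
def nb13 : E3 := v3 (1 / Real.sqrt 2) 0 (-(1 / Real.sqrt 2))
def nb23 : E3 := v3 0 (1 / Real.sqrt 2) (1 / Real.sqrt 2)
def nb32 : E3 := v3 0 (-(1 / Real.sqrt 2)) (1 / Real.sqrt 2)

/-- The corner domain `Ω = {αa + βb + γc : α, β, γ ≥ 0}`. -/
def corner (a b c : E3) : Set E3 :=
  {x | ∃ α β γ : ℝ, 0 ≤ α ∧ 0 ≤ β ∧ 0 ≤ γ ∧ x = α • a + β • b + γ • c}

/-- A generic corner: `a, b, c` are unit vectors in positive order such that the habit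
plane normal `n = b₂₃` cuts off the corner (`a·n, b·n, c·n > 0`). -/
def GenericCorner (a b c : E3) : Prop :=
  ‖a‖ = 1 ∧ ‖b‖ = 1 ∧ ‖c‖ = 1 ∧
  0 < dot3 (cross3 a b) c ∧ 0 < dot3 (cross3 b c) a ∧ 0 < dot3 (cross3 c a) b ∧
  0 < dot3 a nb23 ∧ 0 < dot3 b nb23 ∧ 0 < dot3 c nb23

/-- The parameter `μ` of the corner. -/
def cornerMu (a b c : E3) : ℝ :=
  min (dot3 (‖cross3 a b‖⁻¹ • cross3 a b) c)
    (min (dot3 (‖cross3 b c‖⁻¹ • cross3 b c) a) (dot3 (‖cross3 c a‖⁻¹ • cross3 c a) b))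

/-- `b₃ = (b₂₁ × b₃₂)/|b₂₁ × b₃₂|`. -/
def bb3v : E3 := ‖cross3 nb21 nb32‖⁻¹ • cross3 nb21 nb32

/-- `b₂ = (b₃₂ × b₃)/|b₃₂ × b₃|`. -/
def bb2v : E3 := ‖cross3 nb32 bb3v‖⁻¹ • cross3 nb32 bb3v

/-- `b₁ = (b₃ × b₂₁)/|b₃ × b₂₁|`. -/
def bb1v : E3 := ‖cross3 bb3v nb21‖⁻¹ • cross3 bb3v nb21

/-- The coordinates `yᵢ = x·bᵢ`. -/
def ycoord (i : Fin 3) (x : E3) : ℝ := dot3 x (![bb1v, bb2v, bb3v] i)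

/-- The box `C_R = {−R ≤ y₁ ≤ R, 0 ≤ y₂ ≤ R, 0 ≤ y₃ ≤ R}`. -/
def CRset (R : ℝ) : Set E3 :=
  {x | -R ≤ ycoord 0 x ∧ ycoord 0 x ≤ R ∧ 0 ≤ ycoord 1 x ∧ ycoord 1 x ≤ R ∧
       0 ≤ ycoord 2 x ∧ ycoord 2 x ≤ R}

/-- `C_R⁻ = C_R ∩ {y₁ ≤ 0}`. -/
def CRminus (R : ℝ) : Set E3 := CRset R ∩ {x | ycoord 0 x ≤ 0}

/-- `C_R⁺ = C_R ∩ {y₁ > 0}`. -/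
def CRplus (R : ℝ) : Set E3 := CRset R ∩ {x | 0 < ycoord 0 x}

/-- Matrices of the upper-bound construction. -/
def D1 : Matrix (Fin 3) (Fin 3) ℝ := Matrix.of ![![-2, 2, 0], ![-2, 1, 1], ![0, -1, 1]]
def D2 : Matrix (Fin 3) (Fin 3) ℝ := Matrix.of ![![1, -1, 0], ![1, -2, 1], ![0, -1, 1]]
def DM : Matrix (Fin 3) (Fin 3) ℝ := Matrix.of ![![0, 0, 0], ![0, -1, 1], ![0, -1, 1]]

/-- Tensor product `u ⊗ v` of two vectors. -/
def outer (u v : E3) : Matrix (Fin 3) (Fin 3) ℝ := Matrix.of fun i j => u i * v j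

/-- Symmetrized tensor product `u ⊙ v = (u⊗v + v⊗u)/2`. -/
def symOuter (u v : E3) : Matrix (Fin 3) (Fin 3) ℝ := (2⁻¹ : ℝ) • (outer u v + outer v u)


open Filter Topology Module
open scoped ENNReal RealInnerProductSpace

/-!
Almost every point `x` of the martensitic set `M` is a Lebesgue density point, so along the
ray `x + t (a + b + c)` the ball `B(x + t (a + b + c), κ μ t)` is almost filled by `M` for small
`t`, while for large `t` it is mostly empty because `|M| < ∞`. The volume of `M` in the ball
depends continuously on `t`, so some `t` gives the density exactly `1/2`. The larger ball
`B(x + t (a + b + c), μ t)` stays in the corner, since `μ t` bounds from below the distance of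
its centre to each face. Vitali's covering lemma, applied to the balls of radius `3 t`
(which contain `x`), selects a disjoint subfamily whose fourfold enlargements cover `M`
almost everywhere, and `4 · 3 t < 15 μ⁻¹ · μ t`.
-/

section Continuity

variable {X α : Type*} [TopologicalSpace X] [PseudoMetricSpace α] {c : X → α} {r : X → ℝ}
  {x₀ : X}

theorem continuousAt_indicator_ball_of_notMem_sphere (hc : ContinuousAt c x₀)
    (hr : ContinuousAt r x₀) {y : α} (hy : y ∉ sphere (c x₀) (r x₀)) :
    ContinuousAt (fun x => (ball (c x) (r x)).indicator (1 : α → ℝ) y) x₀ := by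
  have hdist : ContinuousAt (fun x => dist y (c x)) x₀ := continuousAt_const.dist hc
  rcases lt_or_gt_of_ne (mt mem_sphere.2 hy) with hlt | hgt
  · refine (continuousAt_const (y := (1 : ℝ))).congr ?_
    filter_upwards [hdist.eventually_lt hr hlt] with x hx
    exact (indicator_of_mem (mem_ball.2 hx) (1 : α → ℝ)).symm
  · refine (continuousAt_const (y := (0 : ℝ))).congr ?_
    filter_upwards [hr.eventually_lt hdist hgt] with x hx
    exact (indicator_of_notMem (fun h => (mem_ball.1 h).not_gt hx) (1 : α → ℝ)).symm

theorem continuousAt_measureReal_inter_ball [FirstCountableTopology X] [MeasurableSpace α]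
    [OpensMeasurableSpace α] {μ : Measure α} {S : Set α} (hS : μ S ≠ ∞)
    (hc : ContinuousAt c x₀) (hr : ContinuousAt r x₀) (hsphere : μ (sphere (c x₀) (r x₀)) = 0) :
    ContinuousAt (fun x => μ.real (S ∩ ball (c x) (r x))) x₀ := by
  have hintegral : ∀ x, μ.real (S ∩ ball (c x) (r x)) =
      ∫ y in S, (ball (c x) (r x)).indicator 1 y ∂μ := fun x => by
    rw [integral_indicator_one measurableSet_ball, measureReal_restrict_apply measurableSet_ball,
      inter_comm]
  simp only [hintegral]
  refine continuousAt_of_dominated (bound := fun _ => 1)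
    (Eventually.of_forall fun x =>
      (measurable_const.indicator measurableSet_ball).aestronglyMeasurable)
    (Eventually.of_forall fun x => ae_of_all _ fun y => ?_) (integrableOn_const hS) ?_
  · by_cases hy : y ∈ ball (c x) (r x) <;> simp [hy]
  filter_upwards [ae_restrict_of_ae (measure_eq_zero_iff_ae_notMem.1 hsphere)] with y hy
  exact continuousAt_indicator_ball_of_notMem_sphere hc hr hy

end Continuity

theorem mem_closedBall_self_add_smul {E : Type*} [SeminormedAddCommGroup E] [NormedSpace ℝ E]
    (x w : E) {t L : ℝ} (ht : 0 ≤ t) (hL : ‖w‖ ≤ L) : x ∈ closedBall (x + t • w) (L * t) := by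
  rw [mem_closedBall, dist_self_add_right, norm_smul, Real.norm_of_nonneg ht, mul_comm]
  exact mul_le_mul_of_nonneg_right hL ht

section AddHaar

variable {E : Type*} [NormedAddCommGroup E] [NormedSpace ℝ E] [FiniteDimensional ℝ E]
  [MeasurableSpace E] [BorelSpace E] [Nontrivial E] (μ : Measure E) [μ.IsAddHaarMeasure]

theorem measure_inter_closedBall_eq_inter_ball (S : Set E) (x : E) (r : ℝ) :
    μ (S ∩ closedBall x r) = μ (S ∩ ball x r) := by
  refine measure_congr ((ae_eq_refl S).inter (ae_eq_set.2 ⟨?_, ?_⟩))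
  · rw [closedBall_sdiff_ball]
    exact Measure.addHaar_sphere μ x r
  · rw [sdiff_eq_empty.2 ball_subset_closedBall, measure_empty]

theorem measureReal_ball_eq (x : E) {r : ℝ} (hr : 0 ≤ r) :
    μ.real (ball x r) = r ^ finrank ℝ E * μ.real (ball 0 1) := by
  rw [measureReal_def, Measure.addHaar_ball μ x hr, ENNReal.toReal_mul,
    ENNReal.toReal_ofReal (by positivity), measureReal_def]

theorem exists_half_density_ball_on_ray {S : Set E} (hS : μ S ≠ ∞) (w : E) {ρ : ℝ}
    (hρ : 0 < ρ) : ∃ R > 0, ∀ᵐ x ∂μ.restrict S, ∃ t ∈ Ioc 0 R,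
      μ.real (S ∩ ball (x + t • w) (ρ * t)) = μ.real (ball (x + t • w) (ρ * t)) / 2 := by
  set ω := μ.real (ball (0 : E) 1)
  have hω : 0 < ω :=
    ENNReal.toReal_pos (measure_ball_pos μ 0 one_pos).ne' measure_ball_lt_top.ne
  set d := finrank ℝ E
  obtain ⟨R, hRbig, hR⟩ : ∃ R, 2 * μ.real S < (ρ * R) ^ d * ω ∧ 0 < R := by
    have : Tendsto (fun R : ℝ => (ρ * R) ^ d * ω) atTop atTop :=
      ((tendsto_pow_atTop finrank_pos.ne').comp (tendsto_id.const_mul_atTop hρ)).atTop_mul_const hω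
    exact ((this.eventually_gt_atTop _).and (eventually_gt_atTop 0)).exists
  refine ⟨R, hR, ?_⟩
  filter_upwards [IsUnifLocDoublingMeasure.ae_tendsto_measure_inter_div μ S (‖w‖ / ρ)] with x hx
  have hlim : Tendsto (fun t => ρ * t) (𝓝[>] 0) (𝓝[>] 0) :=
    tendsto_nhdsWithin_of_tendsto_nhds_of_eventually_within _
      (((continuous_const_mul ρ).tendsto' 0 0 (mul_zero ρ)).mono_left nhdsWithin_le_nhds)
      (eventually_nhdsWithin_of_forall fun t (ht : 0 < t) => mul_pos hρ ht)
  have hmem : ∀ᶠ t in 𝓝[>] (0 : ℝ), x ∈ closedBall (x + t • w) (‖w‖ / ρ * (ρ * t)) := by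
    filter_upwards [self_mem_nhdsWithin] with t (ht : 0 < t)
    rw [show ‖w‖ / ρ * (ρ * t) = ‖w‖ * t by field_simp]
    exact mem_closedBall_self_add_smul x w ht.le le_rfl
  have hdens := (ENNReal.tendsto_toReal ENNReal.one_ne_top).comp (hx _ _ hlim hmem)
  simp only [measure_inter_closedBall_eq_inter_ball, Measure.addHaar_closedBall_eq_addHaar_ball,
    Function.comp_def, ENNReal.toReal_div, ENNReal.toReal_one, ← measureReal_def] at hdens
  obtain ⟨t₁, ht₁, ht₁₀, ht₁R⟩ := ((hdens.eventually (lt_mem_nhds one_half_lt_one)).and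
    (Ioo_mem_nhdsGT hR)).exists
  set φ : ℝ → ℝ := fun t => μ.real (S ∩ ball (x + t • w) (ρ * t)) - (ρ * t) ^ d * ω / 2
  have hφ : ContinuousOn φ (Icc t₁ R) := fun t _ =>
    ((continuousAt_measureReal_inter_ball hS (by fun_prop) (by fun_prop)
      (Measure.addHaar_sphere μ _ _)).sub (by fun_prop)).continuousWithinAt
  have hφ₁ : 0 ≤ φ t₁ := by
    rw [measureReal_ball_eq μ _ (by positivity), lt_div_iff₀ (by positivity)] at ht₁
    simp only [φ]
    linarith
  have hφR : φ R ≤ 0 := by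
    have := measureReal_mono (μ := μ) (inter_subset_left (t := ball (x + R • w) (ρ * R))) hS
    simp only [φ]
    linarith
  obtain ⟨t, ⟨ht₁t, htR⟩, hφt⟩ := intermediate_value_Icc' ht₁R.le hφ
    (show (0 : ℝ) ∈ Icc (φ R) (φ t₁) from ⟨hφR, hφ₁⟩)
  have ht : 0 < t := ht₁₀.trans_le ht₁t
  refine ⟨t, ⟨ht, htR⟩, ?_⟩
  rw [measureReal_ball_eq μ _ (by positivity)]
  simp only [φ] at hφt
  linarith

theorem exists_disjoint_half_density_balls {S : Set E} (hS : μ S ≠ ∞) (w : E) {ρ L : ℝ}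
    (hρ : 0 < ρ) (hL₀ : 0 < L) (hL : ‖w‖ ≤ L) :
    ∃ (u : Set E) (t : E → ℝ), u ⊆ S ∧ u.Countable ∧ (∀ x ∈ u, 0 < t x) ∧
      u.PairwiseDisjoint (fun x => closedBall (x + t x • w) (L * t x)) ∧
      μ (S \ ⋃ x ∈ u, closedBall (x + t x • w) (4 * (L * t x))) = 0 ∧
      ∀ x ∈ u, μ.real (S ∩ ball (x + t x • w) (ρ * t x)) =
        μ.real (ball (x + t x • w) (ρ * t x)) / 2 := by
  obtain ⟨R, -, hae⟩ := exists_half_density_ball_on_ray μ hS w hρ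
  set G := {x ∈ S | ∃ t ∈ Ioc 0 R, μ.real (S ∩ ball (x + t • w) (ρ * t)) =
      μ.real (ball (x + t • w) (ρ * t)) / 2}
  have hG : μ (S \ G) = 0 := by
    refine measure_mono_null ?_
      (nonpos_iff_eq_zero.1 (ae_iff.1 hae ▸ Measure.le_restrict_apply _ _))
    rintro x ⟨hxS, hxG⟩
    exact ⟨fun h => hxG ⟨hxS, h⟩, hxS⟩
  choose! t ht using fun x (hx : x ∈ G) => hx.2
  obtain ⟨u, huG, hdisj, hcov⟩ := Vitali.exists_disjoint_subfamily_covering_enlargement_closedBall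
    G (fun x => x + t x • w) (fun x => L * t x) (L * R)
    (fun x hx => mul_le_mul_of_nonneg_left (ht x hx).1.2 hL₀.le) 4 (by norm_num)
  have htpos : ∀ x ∈ u, 0 < t x := fun x hx => (ht x (huG hx)).1.1
  have hcovG : G ⊆ ⋃ x ∈ u, closedBall (x + t x • w) (4 * (L * t x)) := fun x hxG => by
    obtain ⟨y, hyu, hy⟩ := hcov x hxG
    exact mem_biUnion hyu (hy (mem_closedBall_self_add_smul x w (ht x hxG).1.1.le hL))
  refine ⟨u, t, huG.trans (sep_subset _ _), hdisj.countable_of_nonempty_interior fun x hx =>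
    ⟨_, ball_subset_interior_closedBall (mem_ball_self (mul_pos hL₀ (htpos x hx)))⟩, htpos,
    hdisj, measure_mono_null (sdiff_subset_sdiff_right hcovG) hG, fun x hx => (ht x (huG hx)).2⟩

end AddHaar

section InnerProduct

variable {F : Type*} [NormedAddCommGroup F] [InnerProductSpace ℝ F]

theorem ball_add_subset_setOf_inner_nonneg {N x v : F} {r : ℝ} (hx : 0 ≤ ⟪N, x⟫)
    (hv : r * ‖N‖ ≤ ⟪N, v⟫) : ball (x + v) r ⊆ {y | 0 ≤ ⟪N, y⟫} := by
  intro y hy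
  have hw : ‖N‖ * ‖y - (x + v)‖ ≤ r * ‖N‖ := by
    rw [mul_comm]
    exact mul_le_mul_of_nonneg_right (mem_ball_iff_norm.1 hy).le (norm_nonneg N)
  have : ⟪N, y⟫ = ⟪N, x⟫ + ⟪N, v⟫ + ⟪N, y - (x + v)⟫ := by
    rw [← inner_add_right, ← inner_add_right]
    congr 1
    abel
  rw [mem_ofPred_eq, this]
  linarith [neg_le_of_abs_le (abs_real_inner_le_norm N (y - (x + v)))]

theorem mul_norm_le_inner_of_le_inner_normalize {N u : F} {m : ℝ}
    (h : m ≤ ⟪‖N‖⁻¹ • N, u⟫) : m * ‖N‖ ≤ ⟪N, u⟫ := by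
  rcases eq_or_ne N 0 with rfl | hN
  · simp
  rw [real_inner_smul_left, le_inv_mul_iff₀ (norm_pos_iff.2 hN)] at h
  linarith

theorem real_inner_normalize_pos {N u : F} (h : 0 < ⟪N, u⟫) : 0 < ⟪‖N‖⁻¹ • N, u⟫ := by
  have hN : N ≠ 0 := by
    rintro rfl
    simp at h
  rw [real_inner_smul_left]
  exact mul_pos (inv_pos.2 (norm_pos_iff.2 hN)) h

theorem real_inner_normalize_le_norm (N u : F) : ⟪‖N‖⁻¹ • N, u⟫ ≤ ‖u‖ := by
  rcases eq_or_ne N 0 with rfl | hN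
  · simp
  calc ⟪‖N‖⁻¹ • N, u⟫ ≤ ‖‖N‖⁻¹ • N‖ * ‖u‖ := real_inner_le_norm _ _
    _ = ‖u‖ := by
      rw [norm_smul, norm_inv, norm_norm, inv_mul_cancel₀ (norm_ne_zero_iff.2 hN), one_mul]

end InnerProduct

theorem dot3_eq_inner (u v : E3) : dot3 u v = ⟪u, v⟫ := by
  simp [dot3, PiLp.inner_apply, mul_comm]

theorem dot3_cross3_smul_add_smul_add_smul (a b c : E3) (α β γ : ℝ) :
    dot3 (cross3 b c) (α • a + β • b + γ • c) = α * dot3 (cross3 b c) a := by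
  simp [dot3, cross3, v3, Fin.sum_univ_three]
  ring

theorem cramer3 (a b c y : E3) :
    dot3 (cross3 a b) c • y =
      dot3 (cross3 b c) y • a + dot3 (cross3 c a) y • b + dot3 (cross3 a b) y • c := by
  ext i
  fin_cases i <;> simp [dot3, cross3, v3, Fin.sum_univ_three] <;> ring

theorem dot3_cross3_nonneg_of_mem_ball {a b c x y : E3} {m t : ℝ} (ht : 0 ≤ t)
    (hm : m ≤ dot3 (‖cross3 b c‖⁻¹ • cross3 b c) a) (hx : 0 ≤ dot3 (cross3 b c) x)
    (hy : y ∈ ball (x + t • (a + b + c)) (m * t)) : 0 ≤ dot3 (cross3 b c) y := by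
  have hv : dot3 (cross3 b c) (t • (a + b + c)) = t * dot3 (cross3 b c) a := by
    rw [smul_add, smul_add, dot3_cross3_smul_add_smul_add_smul]
  simp only [dot3_eq_inner] at hm hx hv ⊢
  refine ball_add_subset_setOf_inner_nonneg hx ?_ hy
  rw [hv, mul_right_comm, mul_comm t]
  exact mul_le_mul_of_nonneg_right (mul_norm_le_inner_of_le_inner_normalize hm) ht

namespace GenericCorner

variable {a b c : E3}

theorem mem_corner_iff (h : GenericCorner a b c) (y : E3) :
    y ∈ corner a b c ↔
      0 ≤ dot3 (cross3 b c) y ∧ 0 ≤ dot3 (cross3 c a) y ∧ 0 ≤ dot3 (cross3 a b) y := by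
  obtain ⟨-, -, -, habc, hbca, hcab, -⟩ := h
  constructor
  · rintro ⟨α, β, γ, hα, hβ, hγ, rfl⟩
    rw [dot3_cross3_smul_add_smul_add_smul, show α • a + β • b + γ • c = β • b + γ • c + α • a by
      abel, dot3_cross3_smul_add_smul_add_smul, show β • b + γ • c + α • a = γ • c + α • a + β • b
      by abel, dot3_cross3_smul_add_smul_add_smul]
    exact ⟨by positivity, by positivity, by positivity⟩
  · rintro ⟨ha, hb, hc⟩
    refine ⟨_, _, _, div_nonneg ha habc.le, div_nonneg hb habc.le, div_nonneg hc habc.le, ?_⟩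
    apply smul_right_injective E3 habc.ne'
    simp only [smul_add, smul_smul, mul_div_cancel₀ _ habc.ne']
    exact cramer3 a b c y

theorem ball_subset_corner (h : GenericCorner a b c) {x : E3} (hx : x ∈ corner a b c) {t : ℝ}
    (ht : 0 ≤ t) : ball (x + t • (a + b + c)) (cornerMu a b c * t) ⊆ corner a b c := by
  intro y hy
  rw [h.mem_corner_iff] at hx ⊢
  obtain ⟨hxa, hxb, hxc⟩ := hx
  have hμa : cornerMu a b c ≤ dot3 (‖cross3 b c‖⁻¹ • cross3 b c) a :=
    (min_le_right _ _).trans (min_le_left _ _)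
  have hμb : cornerMu a b c ≤ dot3 (‖cross3 c a‖⁻¹ • cross3 c a) b :=
    (min_le_right _ _).trans (min_le_right _ _)
  have hμc : cornerMu a b c ≤ dot3 (‖cross3 a b‖⁻¹ • cross3 a b) c := min_le_left _ _
  refine ⟨dot3_cross3_nonneg_of_mem_ball ht hμa hxa hy,
    dot3_cross3_nonneg_of_mem_ball ht hμb hxb ?_, dot3_cross3_nonneg_of_mem_ball ht hμc hxc ?_⟩
  · rwa [show a + b + c = b + c + a by abel] at hy
  · rwa [show a + b + c = c + a + b by abel] at hy

theorem cornerMu_pos (h : GenericCorner a b c) : 0 < cornerMu a b c := by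
  obtain ⟨-, -, -, habc, hbca, hcab, -⟩ := h
  simp only [cornerMu, dot3_eq_inner] at *
  exact lt_min (real_inner_normalize_pos habc)
    (lt_min (real_inner_normalize_pos hbca) (real_inner_normalize_pos hcab))

theorem cornerMu_le_one (h : GenericCorner a b c) : cornerMu a b c ≤ 1 := by
  refine (min_le_left _ _).trans ?_
  rw [dot3_eq_inner, ← h.2.2.1]
  exact real_inner_normalize_le_norm _ _

theorem norm_add_add_le_three (h : GenericCorner a b c) : ‖a + b + c‖ ≤ 3 := by
  calc ‖a + b + c‖ ≤ ‖a‖ + ‖b‖ + ‖c‖ := norm_add₃_le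
    _ = 3 := by rw [h.1, h.2.1, h.2.2.1]; norm_num

end GenericCorner

theorem eq_indicator_setOf_eq_one {α : Type*} {f : α → ℝ} (hf : ∀ x, f x = 0 ∨ f x = 1) :
    f = {x | f x = 1}.indicator 1 := by
  ext x
  rcases hf x with h | h <;> simp [h]

section IndicatorOne

variable {α : Type*} [MeasurableSpace α] {μ : Measure α} {M : Set α}

theorem measure_inter_ne_top_of_integrableOn_indicator_one (hM : MeasurableSet M) {Ω : Set α}
    (h : IntegrableOn (M.indicator (1 : α → ℝ)) Ω μ) : μ (Ω ∩ M) ≠ ∞ := by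
  rw [IntegrableOn, integrable_indicator_iff hM, IntegrableOn, Measure.restrict_restrict hM,
    inter_comm] at h
  exact ((integrableOn_const_iff (C := (1 : ℝ))).1 h).resolve_left (by simp) |>.ne

theorem setIntegral_indicator_one (hM : MeasurableSet M) (B : Set α) :
    ∫ x in B, M.indicator 1 x ∂μ = μ.real (M ∩ B) := by
  rw [integral_indicator_one hM, measureReal_restrict_apply hM]

end IndicatorOne

namespace AdmissiblePhase

variable {Ω : Set E3} {χ : Fin 3 → E3 → ℝ}

theorem sum_eq_zero_or_eq_one (hχ : AdmissiblePhase Ω χ) (x : E3) :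
    χ 0 x + χ 1 x + χ 2 x = 0 ∨ χ 0 x + χ 1 x + χ 2 x = 1 := by
  have hle := hχ.2 x
  rcases (hχ.1 0).2.1 x with h0 | h0 <;> rcases (hχ.1 1).2.1 x with h1 | h1 <;>
    rcases (hχ.1 2).2.1 x with h2 | h2 <;> simp_all <;> norm_num at hle

theorem measurableSet_sum_eq_one (hχ : AdmissiblePhase Ω χ) :
    MeasurableSet {x | χ 0 x + χ 1 x + χ 2 x = 1} :=
  (((hχ.1 0).1.add (hχ.1 1).1).add (hχ.1 2).1) (measurableSet_singleton 1)

theorem volume_sum_eq_one_ne_top (hχ : AdmissiblePhase Ω χ)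
    (hV : IntegrableOn (fun x => χ 0 x + χ 1 x + χ 2 x) Ω) :
    volume {x ∈ Ω | χ 0 x + χ 1 x + χ 2 x = 1} ≠ ∞ := by
  rw [eq_indicator_setOf_eq_one hχ.sum_eq_zero_or_eq_one] at hV
  exact measure_inter_ne_top_of_integrableOn_indicator_one hχ.measurableSet_sum_eq_one hV

theorem setIntegral_sum_of_subset (hχ : AdmissiblePhase Ω χ) {B : Set E3} (hB : B ⊆ Ω) :
    ∫ x in B, (χ 0 x + χ 1 x + χ 2 x) =
      volume.real ({x ∈ Ω | χ 0 x + χ 1 x + χ 2 x = 1} ∩ B) := by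
  rw [eq_indicator_setOf_eq_one hχ.sum_eq_zero_or_eq_one,
    setIntegral_indicator_one hχ.measurableSet_sum_eq_one]
  congr 1
  ext x
  exact ⟨fun hx => ⟨⟨hB hx.2, hx.1⟩, hx.2⟩, fun hx => ⟨hx.1.2, hx.2⟩⟩

end AdmissiblePhase

theorem covering_exists_general (a b c : E3) (h : GenericCorner a b c)
    (κ : ℝ) (hκ : κ ∈ Set.Ioo (0 : ℝ) 1)
    (χ : Fin 3 → E3 → ℝ) (hχ : AdmissiblePhase (corner a b c) χ)
    (hVfin : IntegrableOn (fun x => χ 0 x + χ 1 x + χ 2 x) (corner a b c)) :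
    ∃ (ι : Type) (_ : Countable ι) (xc : ι → E3) (r : ι → ℝ),
      (∀ i, 0 < r i) ∧
      -- (1) the balls are pairwise disjoint and contained in Ω
      (∀ i j, i ≠ j → Disjoint (ball (xc i) (r i)) (ball (xc j) (r j))) ∧
      (∀ i, ball (xc i) (r i) ⊆ corner a b c) ∧
      -- (2) the enlarged balls cover the martensitic region M up to a null set
      volume ({x ∈ corner a b c | χ 0 x + χ 1 x + χ 2 x = 1} \
          ⋃ i, ball (xc i) (15 * (cornerMu a b c)⁻¹ * r i)) = 0 ∧
      -- (3) the martensite volume fraction of each ball B(xᵢ, κ rᵢ) is in [1/10, 9/10]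
      (∀ i,
        (1 / 10) * (volume (ball (xc i) (κ * r i))).toReal ≤
          (∫ x in ball (xc i) (κ * r i), (χ 0 x + χ 1 x + χ 2 x)) ∧
        (∫ x in ball (xc i) (κ * r i), (χ 0 x + χ 1 x + χ 2 x)) ≤
          (9 / 10) * (volume (ball (xc i) (κ * r i))).toReal) := by
  set μ := cornerMu a b c
  set w := a + b + c
  have hμ : 0 < μ := h.cornerMu_pos
  obtain ⟨u, t, huM, hu, ht, hdisj, hcov, hhalf⟩ := exists_disjoint_half_density_balls volume
    (hχ.volume_sum_eq_one_ne_top hVfin) w (mul_pos hκ.1 hμ) zero_lt_three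
    h.norm_add_add_le_three
  have hball (x : u) : ball (x + t x • w) (μ * t x) ⊆ corner a b c :=
    h.ball_subset_corner (huM x.2).1 (ht x x.2).le
  have hsmall (x : u) : ball (x + t x • w) (μ * t x) ⊆ closedBall (x + t x • w) (3 * t x) :=
    ball_subset_closedBall.trans (closedBall_subset_closedBall
      (mul_le_mul_of_nonneg_right (h.cornerMu_le_one.trans (by norm_num)) (ht x x.2).le))
  have hlarge (x : u) : closedBall (x + t x • w) (4 * (3 * t x)) ⊆
      ball (x + t x • w) (15 * μ⁻¹ * (μ * t x)) := by
    refine closedBall_subset_ball ?_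
    rw [mul_assoc 15, inv_mul_cancel_left₀ hμ.ne']
    linarith [ht x x.2]
  refine ⟨u, hu.to_subtype, fun x => x + t x • w, fun x => μ * t x, fun x => mul_pos hμ (ht x x.2),
    fun x y hxy => (hdisj x.2 y.2 (Subtype.coe_injective.ne hxy)).mono (hsmall x) (hsmall y),
    hball, measure_mono_null (sdiff_subset_sdiff_right (iUnion₂_subset fun x hx =>
      (hlarge ⟨x, hx⟩).trans (subset_iUnion_of_subset ⟨x, hx⟩ subset_rfl))) hcov, fun x => ?_⟩
  have hB : ball (x + t x • w) (κ * (μ * t x)) ⊆ corner a b c :=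
    (ball_subset_ball (mul_le_of_le_one_left (mul_pos hμ (ht x x.2)).le hκ.2.le)).trans (hball x)
  rw [hχ.setIntegral_sum_of_subset hB, ← mul_assoc, hhalf x x.2, ← measureReal_def]
  constructor <;> linarith [measureReal_nonneg (μ := volume) (s := ball (x + t x • w) (κ * μ * t x))]

/-- existence of the covering. For every admissible phase indicator on a
generic corner with volume `0 < V < ∞`, there is an at most countable family of balls
which are pairwise disjoint and contained in `Ω`, whose `15μ⁻¹`-enlargements cover the
martensitic region `M` up to a null set, and on each of which (shrunk by `κ`) the
martensite volume fraction lies between `1/10` and `9/10`. -/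
theorem covering_exists (a b c : E3) (h : GenericCorner a b c)
    (κ : ℝ) (hκ : κ ∈ Set.Ioo (0 : ℝ) 1)
    (χ : Fin 3 → E3 → ℝ) (hχ : AdmissiblePhase (corner a b c) χ)
    (hV : 0 < phaseVolume (corner a b c) χ)
    (hVfin : IntegrableOn (fun x => χ 0 x + χ 1 x + χ 2 x) (corner a b c)) :
    ∃ (ι : Type) (_ : Countable ι) (xc : ι → E3) (r : ι → ℝ),
      (∀ i, 0 < r i) ∧
      -- (1) the balls are pairwise disjoint and contained in Ω
      (∀ i j, i ≠ j → Disjoint (ball (xc i) (r i)) (ball (xc j) (r j))) ∧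
      (∀ i, ball (xc i) (r i) ⊆ corner a b c) ∧
      -- (2) the enlarged balls cover the martensitic region M up to a null set
      volume ({x ∈ corner a b c | χ 0 x + χ 1 x + χ 2 x = 1} \
          ⋃ i, ball (xc i) (15 * (cornerMu a b c)⁻¹ * r i)) = 0 ∧
      -- (3) the martensite volume fraction of each ball B(xᵢ, κ rᵢ) is in [1/10, 9/10]
      (∀ i,
        (1 / 10) * (volume (ball (xc i) (κ * r i))).toReal ≤
          (∫ x in ball (xc i) (κ * r i), (χ 0 x + χ 1 x + χ 2 x)) ∧
        (∫ x in ball (xc i) (κ * r i), (χ 0 x + χ 1 x + χ 2 x)) ≤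
          (9 / 10) * (volume (ball (xc i) (κ * r i))).toReal) :=
  covering_exists_general a b c h κ hκ χ hχ hVfin
end
end

section
/- For every permutation (i,j,k) of (1,2,3) with signature ε_{ijk}, the stress-free strains satisfy the habit-plane relation (1/3) e^{(i)} + (2/3) e^{(j)} = 2 ε_{ijk} (b_{jk} ⊙ b_{kj}); i.e., the convex combination with weights 1/3 and 2/3 of two distinct martensitic variant strains is a symmetrized rank-one matrix, and hence compatible with the austenite strain e^{(0)} = 0. -/
noncomputable section

open MeasureTheory Metric Set

/-- The twin/habit-plane normals `b_{ij}` (`i ≠ j`); the diagonal entries are unused. -/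
def twinNormal : Fin 3 → Fin 3 → E3 := ![![0, nb12, nb13], ![nb21, 0, nb23], ![nb31, nb32, 0]]

/-! Write `E m` for the diagonal matrix unit at `m`. Then `e⁽ⁱ⁾ = 1 - 3 E i`, so for `(i,j,k)` a
permutation, `(1/3) e⁽ⁱ⁾ + (2/3) e⁽ʲ⁾ = E k - E j`. When `k` follows `j` cyclically, the normals are
`b_{jk} = (e_j + e_k)/√2` and `b_{kj} = (e_k - e_j)/√2`, and `(a + b) ⊙ (b - a) = b ⊗ b - a ⊗ a`
gives `b_{jk} ⊙ b_{kj} = (E k - E j)/2`. Exchanging `j` and `k` flips the sign of both this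
relation and of the permutation. -/

lemma symOuter_comm (u v : E3) : symOuter u v = symOuter v u := by
  rw [symOuter, symOuter, add_comm]

lemma symOuter_smul_left (c : ℝ) (u v : E3) : symOuter (c • u) v = c • symOuter u v := by
  ext i j
  simp only [symOuter, outer, Matrix.smul_apply, Matrix.add_apply, Matrix.of_apply,
    PiLp.smul_apply, smul_eq_mul]
  ring

lemma symOuter_smul_right (c : ℝ) (u v : E3) : symOuter u (c • v) = c • symOuter u v := by
  rw [symOuter_comm, symOuter_smul_left, symOuter_comm]

lemma symOuter_add_sub (a b : E3) : symOuter (a + b) (b - a) = outer b b - outer a a := by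
  ext i j
  simp only [symOuter, outer, Matrix.smul_apply, Matrix.add_apply, Matrix.sub_apply,
    Matrix.of_apply, PiLp.add_apply, PiLp.sub_apply, smul_eq_mul]
  ring

lemma outer_single_self (j : Fin 3) :
    outer (EuclideanSpace.single j 1) (EuclideanSpace.single j 1) = Matrix.single j j 1 := by
  ext k l
  simp only [outer, Matrix.of_apply, Matrix.single_apply, PiLp.single_apply]
  split_ifs <;> grind

lemma twinNormal_succ (j : Fin 3) :
    twinNormal j (j + 1) =
      (√2)⁻¹ • (EuclideanSpace.single j 1 + EuclideanSpace.single (j + 1) 1) := by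
  ext k
  fin_cases j <;> fin_cases k <;> simp [twinNormal, nb12, nb23, nb31, v3]

lemma twinNormal_succ_swap (j : Fin 3) :
    twinNormal (j + 1) j =
      (√2)⁻¹ • (EuclideanSpace.single (j + 1) 1 - EuclideanSpace.single j 1) := by
  ext k
  fin_cases j <;> fin_cases k <;> simp [twinNormal, nb21, nb32, nb13, v3]

lemma symOuter_twinNormal_succ (j : Fin 3) :
    symOuter (twinNormal j (j + 1)) (twinNormal (j + 1) j) =
      (2⁻¹ : ℝ) • (Matrix.single (j + 1) (j + 1) 1 - Matrix.single j j 1) := by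
  rw [twinNormal_succ, twinNormal_succ_swap, symOuter_smul_left, symOuter_smul_right, smul_smul,
    symOuter_add_sub, outer_single_self, outer_single_self, ← mul_inv,
    Real.mul_self_sqrt zero_le_two]

lemma strains_eq (i : Fin 3) : strains i = 1 - (3 : ℝ) • Matrix.single i i 1 := by
  ext k l
  fin_cases i <;> fin_cases k <;> fin_cases l <;>
    norm_num [strains, em1, em2, em3, Matrix.one_apply, Matrix.single_apply]

lemma weighted_strains_eq_single_sub_single (σ : Equiv.Perm (Fin 3)) :
    (3 : ℝ)⁻¹ • strains (σ 0) + (2 / 3 : ℝ) • strains (σ 1) =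
      Matrix.single (σ 2) (σ 2) 1 - Matrix.single (σ 1) (σ 1) 1 := by
  have one_eq : (1 : Matrix (Fin 3) (Fin 3) ℝ) =
      Matrix.single (σ 0) (σ 0) 1 + Matrix.single (σ 1) (σ 1) 1 + Matrix.single (σ 2) (σ 2) 1 := by
    rw [← Matrix.sum_single_one, ← Equiv.sum_comp σ, Fin.sum_univ_three]
  rw [strains_eq, strains_eq, one_eq]
  module

lemma perm_fin_three_sign_cases (σ : Equiv.Perm (Fin 3)) :
    (σ 2 = σ 1 + 1 ∧ Equiv.Perm.sign σ = 1) ∨ (σ 1 = σ 2 + 1 ∧ Equiv.Perm.sign σ = -1) := by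
  revert σ
  decide

lemma weighted_strains_eq_symOuter_twinNormal (σ : Equiv.Perm (Fin 3)) :
    (3 : ℝ)⁻¹ • strains (σ 0) + (2 / 3 : ℝ) • strains (σ 1) =
      ((2 : ℝ) * ((Equiv.Perm.sign σ : ℤ) : ℝ)) •
        symOuter (twinNormal (σ 1) (σ 2)) (twinNormal (σ 2) (σ 1)) := by
  rw [weighted_strains_eq_single_sub_single]
  rcases perm_fin_three_sign_cases σ with ⟨hsucc, hsign⟩ | ⟨hsucc, hsign⟩
  · rw [hsign, hsucc, symOuter_twinNormal_succ]
    module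
  · rw [hsign, hsucc, symOuter_comm, symOuter_twinNormal_succ]
    module

/-- the habit-plane relation. For every permutation `(i,j,k)` of `(1,2,3)`
with signature `ε`, one has `(1/3) e⁽ⁱ⁾ + (2/3) e⁽ʲ⁾ = 2 ε (b_{jk} ⊙ b_{kj})`; i.e. this
convex combination of two distinct variant strains is a symmetrized rank-one matrix,
hence compatible with the austenite strain `e⁽⁰⁾ = 0`. -/
theorem habit_plane_relation :
    (∀ σ : Equiv.Perm (Fin 3),
      (3 : ℝ)⁻¹ • strains (σ 0) + (2 / 3 : ℝ) • strains (σ 1) =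
        ((2 : ℝ) * ((Equiv.Perm.sign σ : ℤ) : ℝ)) •
          symOuter (twinNormal (σ 1) (σ 2)) (twinNormal (σ 2) (σ 1))) ∧
    ∀ i j : Fin 3, i ≠ j → ∃ u v : E3,
      (3 : ℝ)⁻¹ • strains i + (2 / 3 : ℝ) • strains j = symOuter u v := by
  refine ⟨weighted_strains_eq_symOuter_twinNormal, fun i j hij => ?_⟩
  obtain ⟨σ, rfl, rfl⟩ : ∃ σ : Equiv.Perm (Fin 3), σ 0 = i ∧ σ 1 = j := by
    revert i j
    decide
  exact ⟨_, _,
    (weighted_strains_eq_symOuter_twinNormal σ).trans (symOuter_smul_left _ _ _).symm⟩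

end
end
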